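/- arXiv:2501.08775 — 3 statements merged into one kernel-verified Lean document; each statement's English description precedes it below -/
import Mathlib

section
/- Let L be a random variable with the stationary distribution of a birth-death process with birth rate λ and death rate ℓ + λ in state ℓ (so detailed balance gives λ·π(ℓ) = (ℓ+1+λ)·π(ℓ+1)). If λ ≥ 1/ε for some ε ∈ (0,1), then π(0) ≤ √ε. -/
/-- For the stationary distribution of a birth-death process with birth rate `lam`
and death rate `ℓ + lam` in state `ℓ` (detailed balance
`lam * π ℓ = (ℓ + 1 + lam) * π (ℓ+1)`), if `lam ≥ 1/ε` with `ε ∈ (0,1)`, then the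
steady-state probability of state 0 satisfies `π 0 ≤ √ε`. -/
theorem empty_prob_le_sqrt_eps
    (lam ε : ℝ) (hε0 : 0 < ε) (hε1 : ε < 1) (hlam : 1 / ε ≤ lam)
    (π : ℕ → ℝ)
    (hnonneg : ∀ ℓ, 0 ≤ π ℓ)
    (hsummable : Summable π)
    (hsum : ∑' ℓ, π ℓ = 1)
    (hdb : ∀ ℓ : ℕ, lam * π ℓ = ((ℓ : ℝ) + 1 + lam) * π (ℓ + 1)) :
    π 0 ≤ Real.sqrt ε := by
  have hlam0 : 0 < lam := lt_of_lt_of_le (by positivity) hlam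
  -- superadditivity: π 0 * π (i+j) ≤ π i * π j
  have hsup : ∀ i j : ℕ, π 0 * π (i + j) ≤ π i * π j := by
    intro i j
    induction j with
    | zero => simp [mul_comm]
    | succ j ih =>
      have h1 := hdb (i + j)
      have h2 := hdb j
      have ha : (0:ℝ) < ((i:ℝ) + (j:ℝ)) + 1 + lam := by positivity
      have hb : (0:ℝ) < (j:ℝ) + 1 + lam := by positivity
      have hab : (j:ℝ) + 1 + lam ≤ ((i:ℝ) + (j:ℝ)) + 1 + lam := by
        have : (0:ℝ) ≤ (i:ℝ) := Nat.cast_nonneg i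
        linarith
      have key : ((j:ℝ) + 1 + lam) * lam * (π 0 * π (i + j))
          ≤ (((i:ℝ) + (j:ℝ)) + 1 + lam) * lam * (π i * π j) := by
        apply mul_le_mul
        · exact mul_le_mul_of_nonneg_right hab hlam0.le
        · exact ih
        · exact mul_nonneg (hnonneg 0) (hnonneg (i + j))
        · positivity
      have hcast : ((i + j : ℕ) : ℝ) = (i:ℝ) + (j:ℝ) := by push_cast; ring
      rw [hcast] at h1
      have e1 : ((j:ℝ) + 1 + lam) * lam * (π 0 * π (i + j))
          = (((j:ℝ) + 1 + lam) * ((((i:ℝ) + (j:ℝ)) + 1 + lam))) * (π 0 * π (i + j + 1)) := by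
        linear_combination ((j:ℝ) + 1 + lam) * π 0 * h1
      have e2 : (((i:ℝ) + (j:ℝ)) + 1 + lam) * lam * (π i * π j)
          = (((j:ℝ) + 1 + lam) * ((((i:ℝ) + (j:ℝ)) + 1 + lam))) * (π i * π (j + 1)) := by
        linear_combination ((i:ℝ) + (j:ℝ) + 1 + lam) * π i * h2
      rw [e1, e2] at key
      have key2 := le_of_mul_le_mul_left key
        (by positivity : (0:ℝ) < ((j:ℝ) + 1 + lam) * ((((i:ℝ) + (j:ℝ)) + 1 + lam)))
      exact key2
  -- telescoping: ∑_{m ≤ N} m * π m = lam * (π 0 - π N)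
  have htel : ∀ N : ℕ, ∑ m ∈ Finset.range (N + 1), (m : ℝ) * π m = lam * (π 0 - π N) := by
    intro N
    induction N with
    | zero => simp
    | succ N ih =>
      rw [Finset.sum_range_succ, ih]
      have h := hdb N
      push_cast
      linarith
  -- double-sum identity
  have hsumid : ∀ N : ℕ, ∑ i ∈ Finset.range N, ∑ m ∈ Finset.Ico i N, π m
      = ∑ m ∈ Finset.range N, ((m : ℝ) + 1) * π m := by
    intro N
    induction N with
    | zero => simp
    | succ N ih =>
      rw [Finset.sum_range_succ, Finset.sum_range_succ]
      have hcongr : ∀ i ∈ Finset.range N,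
          ∑ m ∈ Finset.Ico i (N + 1), π m = (∑ m ∈ Finset.Ico i N, π m) + π N := by
        intro i hi
        exact Finset.sum_Ico_succ_top (Nat.le_of_lt (Finset.mem_range.mp hi)) _
      rw [Finset.sum_congr rfl hcongr, Finset.sum_add_distrib, ih, Finset.sum_const,
        Finset.card_range]
      have hico : ∑ m ∈ Finset.Ico N (N + 1), π m = π N := by simp
      rw [hico, nsmul_eq_mul]
      ring
  -- main per-N bound
  have hbound : ∀ N : ℕ, π 0 * ∑ m ∈ Finset.range N, ((m : ℝ) + 1) * π m ≤ 1 := by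
    intro N
    have hpart : ∑ i ∈ Finset.range N, π i ≤ 1 := by
      rw [← hsum]
      exact Summable.sum_le_tsum _ (fun i _ => hnonneg i) hsummable
    have hpartnn : 0 ≤ ∑ i ∈ Finset.range N, π i :=
      Finset.sum_nonneg fun i _ => hnonneg i
    have hsq : (∑ i ∈ Finset.range N, π i) * (∑ j ∈ Finset.range N, π j) ≤ 1 := by
      nlinarith
    have step1 : π 0 * ∑ m ∈ Finset.range N, ((m : ℝ) + 1) * π m
        = ∑ i ∈ Finset.range N, ∑ m ∈ Finset.Ico i N, π 0 * π m := by
      rw [← hsumid, Finset.mul_sum]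
      exact Finset.sum_congr rfl fun i _ => by rw [Finset.mul_sum]
    have step2 : ∀ i ∈ Finset.range N,
        ∑ m ∈ Finset.Ico i N, π 0 * π m ≤ ∑ j ∈ Finset.range N, π i * π j := by
      intro i hi
      rw [Finset.sum_Ico_eq_sum_range]
      calc ∑ j ∈ Finset.range (N - i), π 0 * π (i + j)
          ≤ ∑ j ∈ Finset.range (N - i), π i * π j :=
            Finset.sum_le_sum fun j _ => hsup i j
        _ ≤ ∑ j ∈ Finset.range N, π i * π j := by
            apply Finset.sum_le_sum_of_subset_of_nonneg
            · exact Finset.range_subset_range.mpr (Nat.sub_le N i)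
            · exact fun j _ _ => mul_nonneg (hnonneg i) (hnonneg j)
    calc π 0 * ∑ m ∈ Finset.range N, ((m : ℝ) + 1) * π m
        = ∑ i ∈ Finset.range N, ∑ m ∈ Finset.Ico i N, π 0 * π m := step1
      _ ≤ ∑ i ∈ Finset.range N, ∑ j ∈ Finset.range N, π i * π j :=
          Finset.sum_le_sum step2
      _ = (∑ i ∈ Finset.range N, π i) * (∑ j ∈ Finset.range N, π j) := by
          rw [Finset.sum_mul_sum]
      _ ≤ 1 := hsq
  -- take the limit
  have hmain : π 0 * (lam * π 0 + 1) ≤ 1 := by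
    have hteol : Filter.Tendsto (fun N : ℕ => π N) Filter.atTop (nhds 0) :=
      hsummable.tendsto_atTop_zero
    have hpsum : Filter.Tendsto (fun N : ℕ => ∑ i ∈ Finset.range (N + 1), π i)
        Filter.atTop (nhds 1) := by
      have := hsummable.hasSum.tendsto_sum_nat
      rw [hsum] at this
      exact this.comp (Filter.tendsto_add_atTop_nat 1)
    have hlimit : Filter.Tendsto
        (fun N : ℕ => π 0 * (lam * (π 0 - π N) + ∑ i ∈ Finset.range (N + 1), π i))
        Filter.atTop (nhds (π 0 * (lam * (π 0 - 0) + 1))) := by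
      exact Filter.Tendsto.const_mul _
        ((Filter.Tendsto.const_mul _ (tendsto_const_nhds.sub hteol)).add hpsum)
    have hev : ∀ N : ℕ,
        π 0 * (lam * (π 0 - π N) + ∑ i ∈ Finset.range (N + 1), π i) ≤ 1 := by
      intro N
      have hsplit : ∑ m ∈ Finset.range (N + 1), ((m : ℝ) + 1) * π m
          = lam * (π 0 - π N) + ∑ i ∈ Finset.range (N + 1), π i := by
        rw [← htel N, ← Finset.sum_add_distrib]
        exact Finset.sum_congr rfl fun m _ => by ring
      rw [← hsplit]
      exact hbound (N + 1)
    have := le_of_tendsto hlimit (Filter.Eventually.of_forall hev)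
    linarith [this]
  -- conclude
  have hπ0 : 0 ≤ π 0 := hnonneg 0
  have h1 : lam * π 0 ^ 2 ≤ 1 := by nlinarith
  have h2 : 1 ≤ ε * lam := by
    have := (div_le_iff₀ hε0).mp hlam
    linarith
  have hsq2 : π 0 ^ 2 ≤ ε := by
    have : lam * π 0 ^ 2 ≤ ε * lam := le_trans h1 h2
    nlinarith
  calc π 0 = Real.sqrt (π 0 ^ 2) := (Real.sqrt_sq hπ0).symm
    _ ≤ Real.sqrt ε := Real.sqrt_le_sqrt hsq2
end

section
/- Consider the stationary distribution of a birth-death process on ℕ with birth rate λ in every state and death rate exactly λ + ℓ in state ℓ (abandonment rate 1 per waiting agent plus service rate λ). If L denotes a random variable with this stationary distribution, then E[L] ≤ √λ. -/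
/-- For the stationary distribution of the M/M/1 queue with abandonments (birth rate
`lam` in every state and death rate `lam + ℓ` in state `ℓ`), the mean queue length
satisfies `E[L] = ∑' ℓ, ℓ * π ℓ ≤ √lam`. -/
theorem mean_queue_length_le_sqrt
    (lam : ℝ) (hlam : 0 < lam)
    (π : ℕ → ℝ)
    (hnonneg : ∀ ℓ, 0 ≤ π ℓ)
    (hsummable : Summable π)
    (hsum : ∑' ℓ, π ℓ = 1)
    (hmoment : Summable (fun ℓ : ℕ => (ℓ : ℝ) * π ℓ))
    (hdb : ∀ ℓ : ℕ, lam * π ℓ = (lam + (ℓ : ℝ) + 1) * π (ℓ + 1)) :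
    (∑' ℓ : ℕ, (ℓ : ℝ) * π ℓ) ≤ Real.sqrt lam := by
  -- summability of the auxiliary sequence λ(ℓ+1)π ℓ
  have haux : Summable (fun ℓ : ℕ => lam * (((ℓ:ℝ)+1) * π ℓ)) := by
    have h1 : Summable (fun ℓ : ℕ => ((ℓ:ℝ)+1) * π ℓ) := by
      have := hmoment.add hsummable
      simpa [add_mul, one_mul] using this
    exact h1.mul_left lam
  -- shifted second moment is dominated by it
  have hshift : ∀ ℓ : ℕ, ((ℓ+1:ℕ):ℝ)^2 * π (ℓ+1) ≤ lam * (((ℓ:ℝ)+1) * π ℓ) := by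
    intro ℓ
    have h := hdb ℓ
    have hπ := hnonneg (ℓ+1)
    have hc : (0:ℝ) ≤ (ℓ:ℝ) + 1 := by positivity
    push_cast
    nlinarith [mul_nonneg (mul_nonneg hlam.le hc) hπ]
  have h2shift : Summable (fun ℓ : ℕ => ((ℓ+1:ℕ):ℝ)^2 * π (ℓ+1)) :=
    Summable.of_nonneg_of_le (fun ℓ => mul_nonneg (by positivity) (hnonneg _)) hshift haux
  have h2 : Summable (fun ℓ : ℕ => (ℓ:ℝ)^2 * π ℓ) :=
    (summable_nat_add_iff 1).mp h2shift
  set E := ∑' ℓ : ℕ, (ℓ : ℝ) * π ℓ with hE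
  set S2 := ∑' ℓ : ℕ, (ℓ:ℝ)^2 * π ℓ with hS2
  -- key pointwise identity
  have key : ∀ ℓ : ℕ, lam * (((ℓ:ℝ)+1) * π ℓ)
      = lam * (((ℓ+1:ℕ):ℝ) * π (ℓ+1)) + ((ℓ+1:ℕ):ℝ)^2 * π (ℓ+1) := by
    intro ℓ
    have h := hdb ℓ
    push_cast
    linear_combination ((ℓ:ℝ)+1) * h
  -- the full second-moment sequence
  have hF : Summable (fun m : ℕ => lam * ((m:ℝ) * π m) + (m:ℝ)^2 * π m) :=
    (hmoment.mul_left lam).add h2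
  have hFsum : ∑' m : ℕ, (lam * ((m:ℝ) * π m) + (m:ℝ)^2 * π m) = lam * E + S2 := by
    rw [Summable.tsum_add (hmoment.mul_left lam) h2, tsum_mul_left]
  have hLHS : ∑' ℓ : ℕ, lam * (((ℓ:ℝ)+1) * π ℓ) = lam * (E + 1) := by
    have h1 : ∑' ℓ : ℕ, (((ℓ:ℝ)+1) * π ℓ) = E + 1 := by
      have : (fun ℓ : ℕ => ((ℓ:ℝ)+1) * π ℓ) = fun ℓ : ℕ => (ℓ:ℝ) * π ℓ + π ℓ := by
        funext ℓ; ring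
      rw [this, Summable.tsum_add hmoment hsummable, hsum]
    rw [tsum_mul_left, h1]
  have hRHS : ∑' ℓ : ℕ, (lam * (((ℓ+1:ℕ):ℝ) * π (ℓ+1)) + ((ℓ+1:ℕ):ℝ)^2 * π (ℓ+1))
      = lam * E + S2 := by
    have h0 := Summable.tsum_eq_zero_add hF
    simp only [Nat.cast_zero, zero_mul, mul_zero, ne_eq, OfNat.ofNat_ne_zero,
      not_false_eq_true, zero_pow, zero_add] at h0
    rw [← hFsum, h0]
  have hid : lam * (E + 1) = lam * E + S2 := by
    rw [← hLHS, ← hRHS]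
    exact tsum_congr key
  have hS2lam : S2 = lam := by linarith
  -- Cauchy–Schwarz on finite partial sums
  refine Summable.tsum_le_of_sum_le hmoment ?_
  intro s
  have csq : (∑ ℓ ∈ s, (ℓ:ℝ) * π ℓ)^2
      ≤ (∑ ℓ ∈ s, π ℓ) * (∑ ℓ ∈ s, (ℓ:ℝ)^2 * π ℓ) := by
    have h := Finset.sum_mul_sq_le_sq_mul_sq s (fun ℓ => Real.sqrt (π ℓ))
      (fun ℓ => (ℓ:ℝ) * Real.sqrt (π ℓ))
    have e1 : ∀ ℓ : ℕ, Real.sqrt (π ℓ) * ((ℓ:ℝ) * Real.sqrt (π ℓ)) = (ℓ:ℝ) * π ℓ := by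
      intro ℓ
      have := Real.sq_sqrt (hnonneg ℓ)
      nlinarith [Real.sqrt_nonneg (π ℓ)]
    have e2 : ∀ ℓ : ℕ, Real.sqrt (π ℓ) ^ 2 = π ℓ := fun ℓ => Real.sq_sqrt (hnonneg ℓ)
    have e3 : ∀ ℓ : ℕ, ((ℓ:ℝ) * Real.sqrt (π ℓ)) ^ 2 = (ℓ:ℝ)^2 * π ℓ := by
      intro ℓ; rw [mul_pow, e2]
    simpa [e1, e2, e3] using h
  have hπs : (∑ ℓ ∈ s, π ℓ) ≤ 1 := by
    rw [← hsum]; exact Summable.sum_le_tsum s (fun ℓ _ => hnonneg ℓ) hsummable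
  have h2s : (∑ ℓ ∈ s, (ℓ:ℝ)^2 * π ℓ) ≤ lam := by
    rw [← hS2lam]
    exact Summable.sum_le_tsum s (fun ℓ _ => mul_nonneg (by positivity) (hnonneg ℓ)) h2
  have hsnn : 0 ≤ ∑ ℓ ∈ s, (ℓ:ℝ) * π ℓ :=
    Finset.sum_nonneg fun ℓ _ => mul_nonneg (Nat.cast_nonneg ℓ) (hnonneg ℓ)
  have hsq : (∑ ℓ ∈ s, (ℓ:ℝ) * π ℓ)^2 ≤ lam := by
    calc (∑ ℓ ∈ s, (ℓ:ℝ) * π ℓ)^2 ≤ (∑ ℓ ∈ s, π ℓ) * (∑ ℓ ∈ s, (ℓ:ℝ)^2 * π ℓ) := csq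
      _ ≤ 1 * lam := by
          apply mul_le_mul hπs h2s (Finset.sum_nonneg fun ℓ _ =>
            mul_nonneg (by positivity) (hnonneg ℓ)) (by norm_num)
      _ = lam := one_mul lam
  calc (∑ ℓ ∈ s, (ℓ:ℝ) * π ℓ) = Real.sqrt ((∑ ℓ ∈ s, (ℓ:ℝ) * π ℓ)^2) :=
        (Real.sqrt_sq hsnn).symm
    _ ≤ Real.sqrt lam := Real.sqrt_le_sqrt hsq
end

section
/- Let (x_M^ℓ)_{M ⊆ [m], 0 ≤ ℓ ≤ L} be nonnegative reals summing to 1 that satisfy the relaxed flow inequalities λ·Σ_M x_M^{ℓ−1} ≥ Σ_M x_M^ℓ·(γ(M) + ℓ) for all 1 ≤ ℓ ≤ L, where γ(M) = Σ_{j∈M} γ_j with γ_j ≥ 0 and λ > 0. Then there exists a feasible point (x̃_M^ℓ) with the same objective value Σ_{ℓ,M} Σ_{j∈M} γ_j c_j x̃_M^ℓ ≤ Σ_{ℓ,M} Σ_{j∈M} γ_j c_j x_M^ℓ, the same or larger throughput Σ_{ℓ≥1,M} γ(M) x̃_M^ℓ ≥ Σ_{ℓ≥1,M} γ(M) x_M^ℓ,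 satisfying the flow equalities λ·Σ_M x̃_M^{ℓ−1} = Σ_M x̃_M^ℓ·(γ(M)+ℓ) for all ℓ, in the finite-dimensional case (L < ∞). -/
/-!
Among the relaxed solutions with the same per-matching-set marginals as `x` and at least its
throughput, maximise the level moment `∑ ℓ ℓ · x_M^ℓ`; the feasible set is compact, so a maximiser
exists. If the flow inequality at some level `k` were strict, moving a small mass `δ` of a
matching set `M₀` with `x_{M₀}^{k-1} > 0` up to level `k` would keep it feasible: the outflow at
`k` grows by `δ (γ(M₀) + k)` while the inflow `λ x^{k-1}` shrinks by `λ δ`, which the slack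
absorbs for small `δ`, and every other flow inequality only gains slack. Marginals are unchanged,
throughput does not drop, and the moment grows by `δ`, contradicting maximality.
-/

open Finset

theorem IsCompact.exists_mem_of_forall_not_imp_exists_lt {α : Type*} [TopologicalSpace α]
    {K : Set α} (hK : IsCompact K) (hne : K.Nonempty) {Φ : α → ℝ} (hΦ : ContinuousOn Φ K)
    {P : α → Prop} (h : ∀ y ∈ K, ¬ P y → ∃ z ∈ K, Φ y < Φ z) : ∃ y ∈ K, P y := by
  obtain ⟨y, hyK, hmax⟩ := hK.exists_isMaxOn hne hΦ
  refine ⟨y, hyK, by_contra fun hy => ?_⟩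
  obtain ⟨z, hzK, hlt⟩ := h y hyK hy
  exact absurd (hmax hzK) (not_le.2 hlt)

theorem sum_sum_mul_eq_of_forall_sum_eq {α β R : Type*} [CommSemiring R] {s : Finset α}
    {t : Finset β} {x y : β → α → R} (h : ∀ b ∈ t, ∑ a ∈ s, y b a = ∑ a ∈ s, x b a) (w : β → R) :
    ∑ a ∈ s, ∑ b ∈ t, w b * y b a = ∑ a ∈ s, ∑ b ∈ t, w b * x b a := by
  rw [sum_comm, sum_comm (s := s)]
  exact sum_congr rfl fun b hb => by rw [← mul_sum, ← mul_sum, h b hb]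

section Shift
variable {ι : Type*} [DecidableEq ι]

def shiftUp (y : ι → ℕ → ℝ) (M₀ : ι) (k : ℕ) (δ : ℝ) : ι → ℕ → ℝ :=
  fun M ℓ => y M ℓ + if M = M₀ then (if ℓ = k then δ else 0) - (if ℓ = k - 1 then δ else 0) else 0

variable {y : ι → ℕ → ℝ} {M₀ : ι} {k : ℕ} {δ : ℝ}

theorem shiftUp_of_ne {ℓ : ℕ} (hk : ℓ ≠ k) (hk' : ℓ ≠ k - 1) (M : ι) :
    shiftUp y M₀ k δ M ℓ = y M ℓ := by
  simp [shiftUp, hk, hk']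

theorem shiftUp_nonneg (hy : ∀ M ℓ, 0 ≤ y M ℓ) (hδ : 0 ≤ δ) (hδy : δ ≤ y M₀ (k - 1))
    (M : ι) (ℓ : ℕ) : 0 ≤ shiftUp y M₀ k δ M ℓ := by
  unfold shiftUp
  have := hy M ℓ
  split_ifs <;> subst_vars <;> linarith

theorem sum_shiftUp_of_mem {s : Finset ℕ} (hk : k ∈ s) (hk' : k - 1 ∈ s) (M : ι) :
    ∑ ℓ ∈ s, shiftUp y M₀ k δ M ℓ = ∑ ℓ ∈ s, y M ℓ := by
  by_cases hM : M = M₀ <;> simp [shiftUp, hM, sum_add_distrib, sum_sub_distrib, hk, hk']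

variable [Fintype ι]

theorem sum_shiftUp_mul (f : ι → ℝ) (ℓ : ℕ) :
    ∑ M, shiftUp y M₀ k δ M ℓ * f M
      = ∑ M, y M ℓ * f M + ((if ℓ = k then δ else 0) - (if ℓ = k - 1 then δ else 0)) * f M₀ := by
  simp [shiftUp, add_mul, sum_add_distrib, ite_mul]

theorem sum_sum_mul_shiftUp (s : Finset ℕ) (W : ℕ → ι → ℝ) :
    ∑ ℓ ∈ s, ∑ M, W ℓ M * shiftUp y M₀ k δ M ℓ
      = ∑ ℓ ∈ s, ∑ M, W ℓ M * y M ℓ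
        + δ * ((if k ∈ s then W k M₀ else 0) - (if k - 1 ∈ s then W (k - 1) M₀ else 0)) := by
  simp only [shiftUp, mul_add, sum_add_distrib, mul_ite, mul_zero, sum_ite_eq', mem_univ,
    if_true, mul_sub, sum_sub_distrib]
  split_ifs <;> ring

end Shift

section Flow
variable {ι : Type*} [Fintype ι]

def levelMass (y : ι → ℕ → ℝ) (ℓ : ℕ) : ℝ := ∑ M, y M ℓ

def outflow (g : ι → ℝ) (y : ι → ℕ → ℝ) (ℓ : ℕ) : ℝ := ∑ M, y M ℓ * (g M + ℓ)

def FlowIneqs (lam : ℝ) (g : ι → ℝ) (L : ℕ) (y : ι → ℕ → ℝ) : Prop :=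
  ∀ ℓ, 1 ≤ ℓ → ℓ ≤ L → outflow g y ℓ ≤ lam * levelMass y (ℓ - 1)

def FlowEqs (lam : ℝ) (g : ι → ℝ) (L : ℕ) (y : ι → ℕ → ℝ) : Prop :=
  ∀ ℓ, 1 ≤ ℓ → ℓ ≤ L → lam * levelMass y (ℓ - 1) = outflow g y ℓ

def throughput (g : ι → ℝ) (L : ℕ) (y : ι → ℕ → ℝ) : ℝ := ∑ ℓ ∈ Icc 1 L, ∑ M, g M * y M ℓ

def levelMoment (L : ℕ) (y : ι → ℕ → ℝ) : ℝ := ∑ ℓ ∈ range (L + 1), ∑ M, (ℓ : ℝ) * y M ℓ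

/-- Requiring agreement with `x` above level `L` only serves to make this set compact in the
product topology. -/
def relaxedRegion (lam : ℝ) (g : ι → ℝ) (L : ℕ) (x : ι → ℕ → ℝ) : Set (ι → ℕ → ℝ) :=
  {y | (∀ M ℓ, 0 ≤ y M ℓ) ∧ (∀ M ℓ, L < ℓ → y M ℓ = x M ℓ) ∧
    (∀ M, ∑ ℓ ∈ range (L + 1), y M ℓ = ∑ ℓ ∈ range (L + 1), x M ℓ) ∧
    FlowIneqs lam g L y ∧ throughput g L x ≤ throughput g L y}

variable {lam : ℝ} {g : ι → ℝ} {L : ℕ} {x y : ι → ℕ → ℝ}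

theorem self_mem_relaxedRegion (hx0 : ∀ M ℓ, 0 ≤ x M ℓ) (hx : FlowIneqs lam g L x) :
    x ∈ relaxedRegion lam g L x :=
  ⟨hx0, fun _ _ _ => rfl, fun _ => rfl, hx, le_rfl⟩

theorem isClosed_relaxedRegion : IsClosed (relaxedRegion lam g L x) := by
  simp only [relaxedRegion, FlowIneqs, outflow, levelMass, throughput, Set.ofPred_and,
    Set.ofPred_forall]
  repeat' first
    | apply IsClosed.inter
    | (apply isClosed_iInter; intro)
    | apply isClosed_le
    | apply isClosed_eq
  all_goals fun_prop

theorem isCompact_relaxedRegion : IsCompact (relaxedRegion lam g L x) := by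
  refine (isCompact_univ_pi fun M => isCompact_univ_pi fun ℓ =>
    isCompact_Icc (a := 0) (b := max (∑ ℓ ∈ range (L + 1), x M ℓ) (x M ℓ))).of_isClosed_subset
    isClosed_relaxedRegion fun y ⟨hy0, hyx, hmarg, _⟩ => ?_
  simp only [Set.mem_pi, Set.mem_univ, Set.mem_Icc, forall_const]
  refine fun M ℓ => ⟨hy0 M ℓ, ?_⟩
  rcases le_or_gt ℓ L with hℓ | hℓ
  · rw [← hmarg M]
    exact (single_le_sum (fun ℓ _ => hy0 M ℓ) (mem_range.2 (by omega))).trans (le_max_left _ _)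
  · exact (hyx M ℓ hℓ).le.trans (le_max_right _ _)

theorem continuous_levelMoment : Continuous (levelMoment (ι := ι) L) := by
  unfold levelMoment
  fun_prop

variable [DecidableEq ι] {M₀ : ι} {k : ℕ} {δ : ℝ}

theorem outflow_shiftUp_le (hg : 0 ≤ g M₀) (hδ : 0 ≤ δ) (ℓ : ℕ) :
    outflow g (shiftUp y M₀ k δ) ℓ ≤ outflow g y ℓ + if ℓ = k then δ * (g M₀ + k) else 0 := by
  rw [outflow, outflow, sum_shiftUp_mul]
  have hℓ : (0 : ℝ) ≤ g M₀ + ℓ := by positivity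
  have := mul_nonneg hδ hℓ
  split_ifs <;> subst_vars <;> linarith

theorem levelMass_sub_le_levelMass_shiftUp (hk : 1 ≤ k) (hδ : 0 ≤ δ) {ℓ : ℕ} (hℓ : 1 ≤ ℓ) :
    levelMass y (ℓ - 1) - (if ℓ = k then δ else 0) ≤ levelMass (shiftUp y M₀ k δ) (ℓ - 1) := by
  have h := sum_shiftUp_mul (y := y) (M₀ := M₀) (k := k) (δ := δ) (fun _ => 1) (ℓ - 1)
  simp only [mul_one] at h
  rw [levelMass, levelMass, h]
  split_ifs <;> first | linarith | omega

theorem flowIneqs_shiftUp (hlam : 0 ≤ lam) (hg : 0 ≤ g M₀) (hk : 1 ≤ k) (hδ : 0 ≤ δ)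
    (hy : FlowIneqs lam g L y)
    (hslack : δ * (lam + g M₀ + k) ≤ lam * levelMass y (k - 1) - outflow g y k) :
    FlowIneqs lam g L (shiftUp y M₀ k δ) := by
  intro ℓ hℓ hℓL
  have hout := outflow_shiftUp_le (y := y) (k := k) hg hδ ℓ
  have hmass := mul_le_mul_of_nonneg_left
    (levelMass_sub_le_levelMass_shiftUp (y := y) (M₀ := M₀) hk hδ hℓ) hlam
  have := hy ℓ hℓ hℓL
  split_ifs at hout hmass with hℓk
  · subst hℓk
    linarith
  · linarith

theorem exists_shiftUp_flowIneqs (hlam : 0 ≤ lam) (hg : ∀ M, 0 ≤ g M)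
    (hy0 : ∀ M ℓ, 0 ≤ y M ℓ) (hy : FlowIneqs lam g L y) (hk : 1 ≤ k)
    (hlt : outflow g y k < lam * levelMass y (k - 1)) :
    ∃ M₀ δ, 0 < δ ∧ (∀ M ℓ, 0 ≤ shiftUp y M₀ k δ M ℓ) ∧
      FlowIneqs lam g L (shiftUp y M₀ k δ) := by
  have hout : 0 ≤ outflow g y k :=
    sum_nonneg fun M _ => mul_nonneg (hy0 M k) (add_nonneg (hg M) k.cast_nonneg)
  obtain ⟨M₀, -, hM₀⟩ : ∃ M₀ ∈ univ, 0 < y M₀ (k - 1) :=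
    exists_lt_of_sum_lt (by simpa [levelMass] using pos_of_mul_pos_right (hout.trans_lt hlt) hlam)
  have hden : 0 < lam + g M₀ + k := by
    have : (1 : ℝ) ≤ k := by exact_mod_cast hk
    linarith [hg M₀]
  set σ := lam * levelMass y (k - 1) - outflow g y k
  have hδ : 0 ≤ min (y M₀ (k - 1)) (σ / (lam + g M₀ + k)) :=
    le_min hM₀.le (div_nonneg (by linarith) hden.le)
  exact ⟨M₀, _, lt_min hM₀ (div_pos (by linarith) hden), shiftUp_nonneg hy0 hδ (min_le_left _ _),
    flowIneqs_shiftUp hlam (hg M₀) hk hδ hy ((le_div_iff₀ hden).1 (min_le_right _ _))⟩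

theorem levelMoment_shiftUp (hk : 1 ≤ k) (hkL : k ≤ L) :
    levelMoment L (shiftUp y M₀ k δ) = levelMoment L y + δ := by
  rw [levelMoment, levelMoment, sum_sum_mul_shiftUp, if_pos (mem_range.2 (by omega)),
    if_pos (mem_range.2 (by omega)), Nat.cast_sub hk]
  ring

theorem throughput_le_shiftUp (hg : 0 ≤ g M₀) (hδ : 0 ≤ δ) (hk : 1 ≤ k) (hkL : k ≤ L) :
    throughput g L y ≤ throughput g L (shiftUp y M₀ k δ) := by
  rw [throughput, throughput, sum_sum_mul_shiftUp, if_pos (mem_Icc.2 ⟨hk, hkL⟩)]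
  split_ifs <;> nlinarith

theorem shiftUp_mem_relaxedRegion (hg : ∀ M, 0 ≤ g M) (hy : y ∈ relaxedRegion lam g L x)
    (hk : 1 ≤ k) (hkL : k ≤ L) (hδ : 0 ≤ δ) (hz0 : ∀ M ℓ, 0 ≤ shiftUp y M₀ k δ M ℓ)
    (hz : FlowIneqs lam g L (shiftUp y M₀ k δ)) :
    shiftUp y M₀ k δ ∈ relaxedRegion lam g L x := by
  obtain ⟨-, hyx, hmarg, -, hthr⟩ := hy
  refine ⟨hz0, fun M ℓ hℓ => ?_, fun M => ?_, hz,
    hthr.trans (throughput_le_shiftUp (hg M₀) hδ hk hkL)⟩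
  · rw [shiftUp_of_ne (by omega) (by omega), hyx M ℓ hℓ]
  · rw [sum_shiftUp_of_mem (mem_range.2 (by omega)) (mem_range.2 (by omega)), hmarg M]

theorem exists_flowEqs_mem_relaxedRegion (hlam : 0 ≤ lam) (hg : ∀ M, 0 ≤ g M)
    (hx0 : ∀ M ℓ, 0 ≤ x M ℓ) (hx : FlowIneqs lam g L x) :
    ∃ x' ∈ relaxedRegion lam g L x, FlowEqs lam g L x' := by
  refine isCompact_relaxedRegion.exists_mem_of_forall_not_imp_exists_lt
    ⟨x, self_mem_relaxedRegion hx0 hx⟩ (continuous_levelMoment (L := L)).continuousOn fun y hy hne => ?_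
  have ⟨hy0, _, _, hyflow, _⟩ := hy
  obtain ⟨k, hk, hkL, hlt⟩ : ∃ k, 1 ≤ k ∧ k ≤ L ∧ outflow g y k < lam * levelMass y (k - 1) := by
    simp only [FlowEqs, not_forall] at hne
    obtain ⟨k, hk, hkL, hne⟩ := hne
    exact ⟨k, hk, hkL, (hyflow k hk hkL).lt_of_ne' hne⟩
  obtain ⟨M₀, δ, hδ, hz0, hz⟩ := exists_shiftUp_flowIneqs hlam hg hy0 hyflow hk hlt
  exact ⟨_, shiftUp_mem_relaxedRegion hg hy hk hkL hδ.le hz0 hz,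
    by rw [levelMoment_shiftUp hk hkL]; linarith⟩

end Flow

/-- The relaxed Dynamic LP is tight (finite-dimensional case): from any
nonnegative solution of the relaxed flow inequalities summing to 1, one can
construct a solution satisfying the flow *equalities* with no larger cost and
no smaller throughput. -/
theorem relaxed_dlp_tight
    (m L : ℕ) (lam : ℝ) (hlam : 0 < lam)
    (γ c : Fin m → ℝ) (hγ : ∀ j, 0 ≤ γ j)
    (x : Finset (Fin m) → ℕ → ℝ)
    (hx_nonneg : ∀ M ℓ, 0 ≤ x M ℓ)
    (hx_sum : ∑ ℓ ∈ Finset.range (L + 1), ∑ M : Finset (Fin m), x M ℓ = 1)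
    (hflow : ∀ ℓ, 1 ≤ ℓ → ℓ ≤ L →
      (∑ M : Finset (Fin m), x M ℓ * ((∑ j ∈ M, γ j) + (ℓ : ℝ)))
        ≤ lam * ∑ M : Finset (Fin m), x M (ℓ - 1)) :
    ∃ x' : Finset (Fin m) → ℕ → ℝ,
      (∀ M ℓ, 0 ≤ x' M ℓ) ∧
      (∑ ℓ ∈ Finset.range (L + 1), ∑ M : Finset (Fin m), x' M ℓ = 1) ∧
      (∀ ℓ, 1 ≤ ℓ → ℓ ≤ L →
        lam * (∑ M : Finset (Fin m), x' M (ℓ - 1))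
          = ∑ M : Finset (Fin m), x' M ℓ * ((∑ j ∈ M, γ j) + (ℓ : ℝ))) ∧
      (∑ ℓ ∈ Finset.range (L + 1), ∑ M : Finset (Fin m), ∑ j ∈ M, γ j * c j * x' M ℓ
        ≤ ∑ ℓ ∈ Finset.range (L + 1), ∑ M : Finset (Fin m), ∑ j ∈ M, γ j * c j * x M ℓ) ∧
      (∑ ℓ ∈ Finset.Icc 1 L, ∑ M : Finset (Fin m), (∑ j ∈ M, γ j) * x M ℓ
        ≤ ∑ ℓ ∈ Finset.Icc 1 L, ∑ M : Finset (Fin m), (∑ j ∈ M, γ j) * x' M ℓ) := by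
  obtain ⟨x', ⟨hx'0, -, hmarg, -, hthr⟩, hx'⟩ :=
    exists_flowEqs_mem_relaxedRegion (g := fun M => ∑ j ∈ M, γ j) hlam.le
      (fun M => sum_nonneg fun j _ => hγ j) hx_nonneg hflow
  have hmarg' : ∀ M ∈ univ, ∑ ℓ ∈ range (L + 1), x' M ℓ = ∑ ℓ ∈ range (L + 1), x M ℓ :=
    fun M _ => hmarg M
  refine ⟨x', hx'0, ?_, hx', ?_, hthr⟩
  · rw [← hx_sum]
    simpa using sum_sum_mul_eq_of_forall_sum_eq hmarg' fun _ => 1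
  · simp only [← sum_mul]
    exact (sum_sum_mul_eq_of_forall_sum_eq hmarg' _).le
end
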